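/- arXiv:2604.11366 — 2 statements merged into one kernel-verified Lean document; each statement's English description precedes it below -/
import Mathlib

section
/- Let t be a positive integer, a = ⌊(t+1)/2⌋ and b = ⌈(t+1)/2⌉. Let G₁ be a bipartite graph with parts X and Y containing no subgraph isomorphic to the 4-cycle C_4, and let G = G₁(a, b) be the (a, b)-blow-up of G₁. Then G is a bipartite graph containing no subgraph isomorphic to B_t. -/
open SimpleGraph

/-- `F` is contained in `G` as a subgraph: there is an injective map preserving adjacency. -/
def ContainsCopy {α β : Type*} (F : SimpleGraph α) (G : SimpleGraph β) : Prop :=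
  ∃ f : α → β, Function.Injective f ∧ ∀ ⦃a b : α⦄, F.Adj a b → G.Adj (f a) (f b)

/-- `Bgraph t = K₂ □ S_t`, the Cartesian product of an edge and a star with `t` edges. -/
def Bgraph (t : ℕ) : SimpleGraph (Fin 2 × (Fin 1 ⊕ Fin t)) :=
  (⊤ : SimpleGraph (Fin 2)).boxProd (completeBipartiteGraph (Fin 1) (Fin t))

/-- The `(a, b)`-blow-up of a bipartite graph on `α ⊕ β`: each left vertex is replaced by an
independent set of size `a`, each right vertex by one of size `b`, and each edge by a complete
bipartite graph between the corresponding sets. -/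
def bipBlowup {α β : Type*} (G : SimpleGraph (α ⊕ β)) (a b : ℕ) :
    SimpleGraph ((α × Fin a) ⊕ (β × Fin b)) where
  Adj x y := G.Adj (Sum.map Prod.fst Prod.fst x) (Sum.map Prod.fst Prod.fst y)
  symm := ⟨fun _ _ h => G.adj_symm h⟩
  loopless := ⟨fun _ h => G.irrefl h⟩

/-! Project a copy of `B_t` in the blow-up onto `G₁`: its central edge lands on an edge `pq`.
For each `i`, the path `p, π uᵢ, π vᵢ, q` would close a `C₄` with `pq`, so `π uᵢ = q` or
`π vᵢ = p`. Hence the two central vertices together with one vertex of each of the `t`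
rungs give `t + 2` distinct vertices of the blow-up lying over `{p, q}`; as `p` and `q` are on
opposite sides, those fibres have `a + b = t + 1` vertices in total. -/

lemma containsCopy_cycleGraph_four {V : Type*} (G : SimpleGraph V) {a b c d : V}
    (hab : G.Adj a b) (hbc : G.Adj b c) (hcd : G.Adj c d) (hda : G.Adj d a)
    (hac : a ≠ c) (hbd : b ≠ d) : ContainsCopy (cycleGraph 4) G := by
  have h1 := hab.ne; have h2 := hbc.ne; have h3 := hcd.ne; have h4 := hda.ne
  have hba := hab.symm; have hcb := hbc.symm; have hdc := hcd.symm; have had := hda.symm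
  refine ⟨![a, b, c, d], ?_, ?_⟩
  · intro i j hij
    fin_cases i <;> fin_cases j <;> simp_all
  · intro i j hij
    rw [cycleGraph_adj] at hij
    fin_cases i <;> fin_cases j <;> first | exact absurd hij (by decide) | simp_all

lemma eq_or_eq_of_not_containsCopy_cycleGraph_four {V : Type*} {G : SimpleGraph V}
    (hfree : ¬ ContainsCopy (cycleGraph 4) G) {p q x y : V}
    (hpq : G.Adj p q) (hpx : G.Adj p x) (hxy : G.Adj x y) (hyq : G.Adj y q) :
    x = q ∨ y = p := by
  by_contra! h
  exact hfree (containsCopy_cycleGraph_four G hpx hxy hyq hpq.symm h.2.symm h.1)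

lemma exists_injective_over_edge_of_containsCopy_Bgraph {V W : Type*} {H : SimpleGraph V}
    {G : SimpleGraph W} (π : H →g G) (hfree : ¬ ContainsCopy (cycleGraph 4) G) {t : ℕ}
    (hB : ContainsCopy (Bgraph t) H) :
    ∃ p q : W, G.Adj p q ∧ ∃ e : Fin 2 ⊕ Fin t → V, Function.Injective e ∧
      ∀ z, π (e z) = p ∨ π (e z) = q := by
  classical
  obtain ⟨f, hf, hadj⟩ := hB
  have hBadj : ∀ {x y}, (Bgraph t).Adj x y → G.Adj (π (f x)) (π (f y)) :=
    fun h => π.map_adj (hadj h)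
  have hspine : (Bgraph t).Adj (0, .inl 0) (1, .inl 0) := by simp [Bgraph, boxProd_adj]
  have hleg : ∀ (k : Fin 2) i, (Bgraph t).Adj (k, .inl 0) (k, .inr i) := by
    simp [Bgraph, boxProd_adj]
  have hrung : ∀ i, (Bgraph t).Adj (0, .inr i) (1, .inr i) := by simp [Bgraph, boxProd_adj]
  set p := π (f (0, .inl 0))
  set q := π (f (1, .inl 0))
  let σ : Fin 2 ⊕ Fin t → Fin 2 × (Fin 1 ⊕ Fin t) :=
    Sum.elim (fun k => (k, .inl 0))
      (fun i => if π (f (0, .inr i)) = q then (0, .inr i) else (1, .inr i))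
  have hσ : Function.Injective σ := by
    rintro (k | i) (k' | i') h <;> simp only [σ, Sum.elim_inl, Sum.elim_inr] at h <;>
      (try split_ifs at h) <;> simp_all [Prod.ext_iff]
  refine ⟨p, q, hBadj hspine, f ∘ σ, hf.comp hσ, ?_⟩
  rintro (k | i)
  · fin_cases k <;> simp [σ, p, q]
  · by_cases hi : π (f (0, .inr i)) = q
    · simp [σ, hi]
    · have := (eq_or_eq_of_not_containsCopy_cycleGraph_four hfree (hBadj hspine)
        (hBadj (hleg 0 i)) (hBadj (hrung i)) (hBadj (hleg 1 i)).symm).resolve_left hi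
      exact .inl (by simpa [σ, hi] using this)

namespace bipBlowup

variable {α β : Type*} {G : SimpleGraph (α ⊕ β)} {a b : ℕ}

def proj (G : SimpleGraph (α ⊕ β)) (a b : ℕ) : bipBlowup G a b →g G where
  toFun := Sum.map Prod.fst Prod.fst
  map_rel' h := h

@[simp]
lemma proj_apply (w : (α × Fin a) ⊕ (β × Fin b)) :
    proj G a b w = Sum.map Prod.fst Prod.fst w :=
  rfl

lemma sides_of_adj
    (hbip : ∀ ⦃u v : α ⊕ β⦄, G.Adj u v → (u.isLeft ∧ v.isRight) ∨ (u.isRight ∧ v.isLeft))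
    ⦃x y : (α × Fin a) ⊕ (β × Fin b)⦄ (h : (bipBlowup G a b).Adj x y) :
    (x.isLeft ∧ y.isRight) ∨ (x.isRight ∧ y.isLeft) := by
  simpa only [Sum.isLeft_map, Sum.isRight_map] using hbip h

lemma injOn_map_snd_of_isLeft_ne {p q : α ⊕ β} (hpq : p.isLeft ≠ q.isLeft) :
    Set.InjOn (Sum.map Prod.snd Prod.snd : (α × Fin a) ⊕ (β × Fin b) → Fin a ⊕ Fin b)
      (proj G a b ⁻¹' {p, q}) := by
  intro w hw w' hw' h
  have hside : (proj G a b w).isLeft = (proj G a b w').isLeft := by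
    simpa only [proj_apply, Sum.isLeft_map] using congrArg Sum.isLeft h
  have hproj : proj G a b w = proj G a b w' := by
    rcases hw with hw | hw <;> rcases hw' with hw' | hw' <;> rw [hw, hw'] at hside ⊢ <;>
      first | rfl | exact absurd hside hpq | exact absurd hside.symm hpq
  rcases w with ⟨x, i⟩ | ⟨x, i⟩ <;> rcases w' with ⟨x', i'⟩ | ⟨x', i'⟩ <;>
    simp_all

lemma card_le_of_injective_over_edge
    (hbip : ∀ ⦃u v : α ⊕ β⦄, G.Adj u v → (u.isLeft ∧ v.isRight) ∨ (u.isRight ∧ v.isLeft))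
    {p q : α ⊕ β} (hpq : G.Adj p q) {ι : Type*} [Fintype ι]
    {e : ι → (α × Fin a) ⊕ (β × Fin b)} (he : Function.Injective e)
    (hpe : ∀ z, proj G a b (e z) = p ∨ proj G a b (e z) = q) :
    Fintype.card ι ≤ a + b := by
  have hside : p.isLeft ≠ q.isLeft := by
    rcases hbip hpq with ⟨hp, hq⟩ | ⟨hp, hq⟩ <;> cases p <;> cases q <;> simp_all
  simpa using Fintype.card_le_of_injective (Sum.map Prod.snd Prod.snd ∘ e)
    fun z z' h => he (injOn_map_snd_of_isLeft_ne hside (hpe z) (hpe z') h)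

end bipBlowup

theorem bipBlowup_Bt_free_general (t : ℕ) {α β : Type*} (G₁ : SimpleGraph (α ⊕ β))
    (hbip : ∀ ⦃u v : α ⊕ β⦄, G₁.Adj u v →
      (u.isLeft ∧ v.isRight) ∨ (u.isRight ∧ v.isLeft))
    (hfree : ¬ ContainsCopy (cycleGraph 4) G₁) :
    (∀ ⦃x y : (α × Fin ((t + 1) / 2)) ⊕ (β × Fin ((t + 2) / 2))⦄,
        (bipBlowup G₁ ((t + 1) / 2) ((t + 2) / 2)).Adj x y →
        (x.isLeft ∧ y.isRight) ∨ (x.isRight ∧ y.isLeft)) ∧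
    ¬ ContainsCopy (Bgraph t) (bipBlowup G₁ ((t + 1) / 2) ((t + 2) / 2)) := by
  refine ⟨bipBlowup.sides_of_adj hbip, fun hB => ?_⟩
  obtain ⟨p, q, hpq, e, he, hpe⟩ :=
    exists_injective_over_edge_of_containsCopy_Bgraph (bipBlowup.proj _ _ _) hfree hB
  have := bipBlowup.card_le_of_injective_over_edge hbip hpq he hpe
  simp only [Fintype.card_sum, Fintype.card_fin] at this
  omega

theorem bipBlowup_Bt_free (t : ℕ) (ht : 1 ≤ t) {α β : Type*} (G₁ : SimpleGraph (α ⊕ β))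
    (hbip : ∀ ⦃u v : α ⊕ β⦄, G₁.Adj u v →
      (u.isLeft ∧ v.isRight) ∨ (u.isRight ∧ v.isLeft))
    (hfree : ¬ ContainsCopy (cycleGraph 4) G₁) :
    (∀ ⦃x y : (α × Fin ((t + 1) / 2)) ⊕ (β × Fin ((t + 2) / 2))⦄,
        (bipBlowup G₁ ((t + 1) / 2) ((t + 2) / 2)).Adj x y →
        (x.isLeft ∧ y.isRight) ∨ (x.isRight ∧ y.isLeft)) ∧
    ¬ ContainsCopy (Bgraph t) (bipBlowup G₁ ((t + 1) / 2) ((t + 2) / 2)) :=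
  bipBlowup_Bt_free_general t G₁ hbip hfree
end

section
/- Let t ≥ 2 be an integer, let G be a graph containing no subgraph isomorphic to B_t, and let uv be an edge of G. Then the number of copies of the 4-cycle C_4 in G that contain the edge uv is at most (t − 1)·(d(u) + d(v)), where d(u) and d(v) are the degrees of u and v. -/
open SimpleGraph

def Scattered {V : Type*} (F : Finset (V × V)) : Prop :=
  ∀ p ∈ F, ∀ q ∈ F, p ≠ q → p.1 ≠ q.1 ∧ p.1 ≠ q.2 ∧ p.2 ≠ q.1 ∧ p.2 ≠ q.2

lemma pair_count_le {V : Type*} [DecidableEq V] (m : ℕ) (X Y : Finset V) (S : Finset (V × V))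
    (hS : ∀ p ∈ S, p.1 ∈ X ∧ p.2 ∈ Y ∧ p.1 ≠ p.2)
    (hscat : ∀ F ⊆ S, Scattered F → F.card ≤ m) :
    S.card ≤ m * (X.card + Y.card) := by
  induction m generalizing S with
  | zero =>
    have hempty : S = ∅ := by
      by_contra h
      obtain ⟨p, hp⟩ := Finset.nonempty_of_ne_empty h
      have h1 := hscat {p} (by simpa using hp)
        (by intro a ha b hb hab; simp only [Finset.mem_singleton] at ha hb
            exact absurd (ha.trans hb.symm) hab)
      simp at h1
    simp [hempty]
  | succ m ih =>
    by_cases hcase : ∃ w, ∀ F ⊆ S.filter (fun p => p.1 ≠ w ∧ p.2 ≠ w), Scattered F → F.card ≤ m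
    · obtain ⟨w, hw⟩ := hcase
      set S' := S.filter (fun p => p.1 ≠ w ∧ p.2 ≠ w) with hS'def
      set A := S.filter (fun p => p.1 = w) with hAdef
      set B := S.filter (fun p => p.1 ≠ w ∧ p.2 = w) with hBdef
      have h1 : S'.card ≤ m * (X.card + Y.card) :=
        ih S' (fun p hp => hS p (Finset.mem_filter.1 hp).1) hw
      have hA : A.card ≤ Y.card := by
        apply Finset.card_le_card_of_injOn Prod.snd
          (fun p hp => (hS p (Finset.mem_filter.1 hp).1).2.1)
        intro p hp q hq hpq
        simp only [hAdef, Finset.coe_filter, Set.mem_setOf_eq] at hp hq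
        exact Prod.ext (hp.2.trans hq.2.symm) hpq
      have hB : B.card ≤ X.card := by
        apply Finset.card_le_card_of_injOn Prod.fst
          (fun p hp => (hS p (Finset.mem_filter.1 hp).1).1)
        intro p hp q hq hpq
        simp only [hBdef, Finset.coe_filter, Set.mem_setOf_eq] at hp hq
        exact Prod.ext hpq (hp.2.2.trans hq.2.2.symm)
      have hsub : S ⊆ S' ∪ A ∪ B := by
        intro p hp
        simp only [hS'def, hAdef, hBdef, Finset.mem_union, Finset.mem_filter]
        by_cases h1 : p.1 = w
        · exact Or.inl (Or.inr ⟨hp, h1⟩)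
        by_cases h2 : p.2 = w
        · exact Or.inr ⟨hp, h1, h2⟩
        · exact Or.inl (Or.inl ⟨hp, h1, h2⟩)
      have hcard : S.card ≤ S'.card + A.card + B.card :=
        le_trans (Finset.card_le_card hsub)
          (le_trans (Finset.card_union_le _ _) (by
            have := Finset.card_union_le S' A
            omega))
      have e : (m+1) * (X.card + Y.card) = m * (X.card + Y.card) + (X.card + Y.card) := by ring
      omega
    · push_neg at hcase
      have key : ∀ w : V, (S.filter (fun p => p.1 = w)).card ≤ 2 * (m+1) ∧
          (S.filter (fun p => p.2 = w)).card ≤ 2 * (m+1) := by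
        intro w
        obtain ⟨F, hFsub, hFscat, hFcard⟩ := hcase w
        have hFS : F ⊆ S := hFsub.trans (Finset.filter_subset _ _)
        set T := F.image Prod.fst ∪ F.image Prod.snd with hTdef
        have hTcard : T.card ≤ 2 * (m+1) := by
          rw [hTdef]
          have h1 := Finset.card_image_le (s := F) (f := Prod.fst)
          have h2 := Finset.card_image_le (s := F) (f := Prod.snd)
          have h3 := hscat F hFS hFscat
          have h4 := Finset.card_union_le (F.image Prod.fst) (F.image Prod.snd)
          omega
        have hwF : ∀ p ∈ F, p.1 ≠ w ∧ p.2 ≠ w := by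
          intro p hp
          have := hFsub hp
          simpa using (Finset.mem_filter.1 this).2
        have hmemT : ∀ p ∈ F, p.1 ∈ T ∧ p.2 ∈ T := by
          intro p hp
          exact ⟨Finset.mem_union_left _ (Finset.mem_image_of_mem _ hp),
            Finset.mem_union_right _ (Finset.mem_image_of_mem _ hp)⟩
        have hwT : w ∉ T := by
          intro hw
          rcases Finset.mem_union.1 hw with h | h <;>
            obtain ⟨q, hq, hq2⟩ := Finset.mem_image.1 h
          · exact (hwF q hq).1 hq2
          · exact (hwF q hq).2 hq2
        have habs : ∀ p ∈ S, p ∉ F → p.1 ∉ T → p.2 ∉ T → False := by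
          intro p hp hpF h1 h2
          have hsub2 : insert p F ⊆ S := Finset.insert_subset hp hFS
          have hscat2 : Scattered (insert p F) := by
            intro a ha b hb hab
            rcases Finset.mem_insert.1 ha with rfl | ha' <;>
              rcases Finset.mem_insert.1 hb with rfl | hb'
            · exact absurd rfl hab
            · exact ⟨fun h => h1 (h ▸ (hmemT b hb').1), fun h => h1 (h ▸ (hmemT b hb').2),
                fun h => h2 (h ▸ (hmemT b hb').1), fun h => h2 (h ▸ (hmemT b hb').2)⟩
            · exact ⟨fun h => h1 (h ▸ (hmemT a ha').1), fun h => h2 (h ▸ (hmemT a ha').1),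
                fun h => h1 (h ▸ (hmemT a ha').2), fun h => h2 (h ▸ (hmemT a ha').2)⟩
            · exact hFscat a ha' b hb' hab
          have hle := hscat (insert p F) hsub2 hscat2
          rw [Finset.card_insert_of_notMem hpF] at hle
          omega
        constructor
        · refine le_trans (Finset.card_le_card_of_injOn Prod.snd ?_ ?_) hTcard
          · intro p hp
            obtain ⟨hpS, hp1⟩ := Finset.mem_filter.1 hp
            by_contra h2
            exact habs p hpS (fun h => (hwF p h).1 hp1) (hp1 ▸ hwT) h2
          · intro p hp q hq hpq
            simp only [Finset.coe_filter, Set.mem_setOf_eq] at hp hq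
            exact Prod.ext (hp.2.trans hq.2.symm) hpq
        · refine le_trans (Finset.card_le_card_of_injOn Prod.fst ?_ ?_) hTcard
          · intro p hp
            obtain ⟨hpS, hp2⟩ := Finset.mem_filter.1 hp
            by_contra h1
            exact habs p hpS (fun h => (hwF p h).2 hp2) h1 (hp2 ▸ hwT)
          · intro p hp q hq hpq
            simp only [Finset.coe_filter, Set.mem_setOf_eq] at hp hq
            exact Prod.ext hpq (hp.2.trans hq.2.symm)
      have h1 : S.card ≤ X.card * (2 * (m+1)) := by
        rw [Finset.card_eq_sum_card_fiberwise (f := Prod.fst) (t := X)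
          (fun p hp => (hS p hp).1)]
        calc ∑ x ∈ X, (S.filter (fun p => p.1 = x)).card
            ≤ ∑ _x ∈ X, 2 * (m+1) := Finset.sum_le_sum (fun x _ => (key x).1)
          _ = X.card * (2 * (m+1)) := by rw [Finset.sum_const, smul_eq_mul]
      have h2 : S.card ≤ Y.card * (2 * (m+1)) := by
        rw [Finset.card_eq_sum_card_fiberwise (f := Prod.snd) (t := Y)
          (fun p hp => (hS p hp).2.1)]
        calc ∑ y ∈ Y, (S.filter (fun p => p.2 = y)).card
            ≤ ∑ _y ∈ Y, 2 * (m+1) := Finset.sum_le_sum (fun y _ => (key y).2)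
          _ = Y.card * (2 * (m+1)) := by rw [Finset.sum_const, smul_eq_mul]
      have h3 : 2 * S.card ≤ 2 * ((m+1) * (X.card + Y.card)) := by
        calc 2 * S.card = S.card + S.card := by ring
          _ ≤ X.card * (2 * (m+1)) + Y.card * (2 * (m+1)) := add_le_add h1 h2
          _ = 2 * ((m+1) * (X.card + Y.card)) := by ring
      exact Nat.le_of_mul_le_mul_left h3 (by norm_num)

theorem c4_through_edge (t : ℕ) (ht : 2 ≤ t) {V : Type*} [Fintype V] (G : SimpleGraph V)
    (hfree : ¬ ContainsCopy (Bgraph t) G) (u v : V) (huv : G.Adj u v) :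
    {p : V × V | G.Adj v p.1 ∧ G.Adj p.1 p.2 ∧ G.Adj p.2 u ∧
        p.1 ≠ u ∧ p.2 ≠ v}.ncard
      ≤ (t - 1) * ((G.neighborSet u).ncard + (G.neighborSet v).ncard) := by
  classical
  set S : Finset (V × V) := Finset.univ.filter (fun p =>
    G.Adj v p.1 ∧ G.Adj p.1 p.2 ∧ G.Adj p.2 u ∧ p.1 ≠ u ∧ p.2 ≠ v) with hSdef
  have hset : {p : V × V | G.Adj v p.1 ∧ G.Adj p.1 p.2 ∧ G.Adj p.2 u ∧ p.1 ≠ u ∧ p.2 ≠ v}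
      = ↑S := by ext p; simp [hSdef]
  rw [hset, Set.ncard_coe_finset]
  set X : Finset V := (G.neighborSet v).toFinset with hXdef
  set Y : Finset V := (G.neighborSet u).toFinset with hYdef
  have hmemS : ∀ p ∈ S, G.Adj v p.1 ∧ G.Adj p.1 p.2 ∧ G.Adj p.2 u ∧ p.1 ≠ u ∧ p.2 ≠ v := by
    intro p hp; simpa [hSdef] using hp
  have hXcard : X.card = (G.neighborSet v).ncard := (Set.ncard_eq_toFinset_card' _).symm
  have hYcard : Y.card = (G.neighborSet u).ncard := (Set.ncard_eq_toFinset_card' _).symm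
  have hfin : ∀ z : Fin 2, z = 0 ∨ z = 1 := by decide
  have h00 : ((0:Fin 2) = 0) = True := eq_true rfl
  have h10 : ((1:Fin 2) = 0) = False := eq_false (by decide)
  have hmain : S.card ≤ (t - 1) * (X.card + Y.card) := by
    apply pair_count_le
    · intro p hp
      obtain ⟨h1, h2, h3, _, _⟩ := hmemS p hp
      refine ⟨?_, ?_, h2.ne⟩
      · rw [hXdef, Set.mem_toFinset]; exact h1
      · rw [hYdef, Set.mem_toFinset]; exact h3.symm
    · intro F hF hscatF
      by_contra hc
      push_neg at hc
      have htF : t ≤ F.card := by omega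
      have hgex : ∃ g : Fin t → V × V, Function.Injective g ∧ ∀ j, g j ∈ F := by
        obtain ⟨F', hF'sub, hF'card⟩ := Finset.exists_subset_card_eq htF
        exact ⟨fun j => ((Finset.equivFinOfCardEq hF'card).symm j : V × V),
          fun j k h => (Finset.equivFinOfCardEq hF'card).symm.injective (Subtype.ext h),
          fun j => hF'sub (Finset.coe_mem _)⟩
      obtain ⟨g, hginj, hgmem⟩ := hgex
      have hprop : ∀ j, G.Adj v (g j).1 ∧ G.Adj (g j).1 (g j).2 ∧ G.Adj (g j).2 u ∧
          (g j).1 ≠ u ∧ (g j).2 ≠ v := fun j => hmemS _ (hF (hgmem j))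
      have hdisj : ∀ j k, j ≠ k → (g j).1 ≠ (g k).1 ∧ (g j).1 ≠ (g k).2 ∧
          (g j).2 ≠ (g k).1 ∧ (g j).2 ≠ (g k).2 :=
        fun j k h => hscatF _ (hgmem j) _ (hgmem k) (fun he => h (hginj he))
      have hune : u ≠ v := huv.ne
      have hxu : ∀ j, (g j).1 ≠ u := fun j => (hprop j).2.2.2.1
      have hxv : ∀ j, (g j).1 ≠ v := fun j => ((hprop j).1).ne'
      have hyu : ∀ j, (g j).2 ≠ u := fun j => ((hprop j).2.2.1).ne
      have hyv : ∀ j, (g j).2 ≠ v := fun j => (hprop j).2.2.2.2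
      have hxx : ∀ j j', (g j).1 = (g j').1 → j = j' := by
        intro j j' h; by_contra hne; exact (hdisj j j' hne).1 h
      have hyy : ∀ j j', (g j).2 = (g j').2 → j = j' := by
        intro j j' h; by_contra hne; exact (hdisj j j' hne).2.2.2 h
      have hxy : ∀ j j', (g j).1 ≠ (g j').2 := by
        intro j j'
        by_cases h : j = j'
        · subst h; exact ((hprop j).2.1).ne
        · exact (hdisj j j' h).2.1
      apply hfree
      refine ⟨fun a => Sum.elim (fun _ => if a.1 = 0 then u else v)
        (fun j => if a.1 = 0 then (g j).2 else (g j).1) a.2, ?_, ?_⟩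
      · -- injectivity
        rintro ⟨i, c⟩ ⟨i', c'⟩ hab
        rcases c with c0 | j <;> rcases c' with c0' | j' <;>
          simp only [Sum.elim_inl, Sum.elim_inr] at hab
        · -- inl, inl
          have hii : i = i' := by
            rcases hfin i with h1 | h1 <;> rcases hfin i' with h2 | h2 <;> subst h1 <;> subst h2
            · rfl
            · rw [if_pos rfl, if_neg (by decide)] at hab; exact absurd hab hune
            · rw [if_neg (by decide), if_pos rfl] at hab; exact absurd hab hune.symm
            · rfl
          rw [hii, Subsingleton.elim c0 c0']
        · -- inl, inr
          exfalso
          rcases hfin i with h1 | h1 <;> rcases hfin i' with h2 | h2 <;> subst h1 <;> subst h2 <;>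
            simp only [h00, h10, if_true, if_false] at hab
          · exact (hyu j') hab.symm
          · exact (hxu j') hab.symm
          · exact (hyv j') hab.symm
          · exact (hxv j') hab.symm
        · -- inr, inl
          exfalso
          rcases hfin i with h1 | h1 <;> rcases hfin i' with h2 | h2 <;> subst h1 <;> subst h2 <;>
            simp only [h00, h10, if_true, if_false] at hab
          · exact (hyu j) hab
          · exact (hyv j) hab
          · exact (hxu j) hab
          · exact (hxv j) hab
        · -- inr, inr
          rcases hfin i with h1 | h1 <;> rcases hfin i' with h2 | h2 <;> subst h1 <;> subst h2 <;>
            simp only [h00, h10, if_true, if_false] at hab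
          · rw [hyy j j' hab]
          · exact absurd hab.symm (hxy j' j)
          · exact absurd hab (hxy j j')
          · rw [hxx j j' hab]
      · -- adjacency
        rintro ⟨i, c⟩ ⟨i', c'⟩ hadj
        simp only [Bgraph, SimpleGraph.boxProd_adj, SimpleGraph.top_adj] at hadj
        rcases c with c0 | j <;> rcases c' with c0' | j' <;>
          simp only [Sum.elim_inl, Sum.elim_inr]
        · -- inl, inl : need Adj (u or v) (u or v)
          rcases hadj with ⟨hne, _⟩ | ⟨hbip, _⟩
          · rcases hfin i with h1 | h1 <;> rcases hfin i' with h2 | h2 <;>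
              subst h1 <;> subst h2 <;> simp only [h00, h10, if_true, if_false]
            · exact absurd rfl hne
            · exact huv
            · exact huv.symm
            · exact absurd rfl hne
          · exfalso; simpa using hbip
        · -- inl, inr
          rcases hadj with ⟨_, heq⟩ | ⟨_, heq⟩
          · exact absurd heq (by simp)
          · subst heq
            rcases hfin i with h1 | h1 <;> subst h1 <;> simp only [h00, h10, if_true, if_false]
            · exact ((hprop j').2.2.1).symm
            · exact (hprop j').1
        · -- inr, inl
          rcases hadj with ⟨_, heq⟩ | ⟨_, heq⟩
          · exact absurd heq (by simp)
          · subst heq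
            rcases hfin i with h1 | h1 <;> subst h1 <;> simp only [h00, h10, if_true, if_false]
            · exact (hprop j).2.2.1
            · exact ((hprop j).1).symm
        · -- inr, inr
          rcases hadj with ⟨hne, heq⟩ | ⟨hbip, _⟩
          · rw [Sum.inr.injEq] at heq
            subst heq
            rcases hfin i with h1 | h1 <;> rcases hfin i' with h2 | h2 <;>
              subst h1 <;> subst h2 <;> simp only [h00, h10, if_true, if_false]
            · exact absurd rfl hne
            · exact ((hprop j).2.1).symm
            · exact (hprop j).2.1
            · exact absurd rfl hne
          · exfalso; simpa using hbip
  calc S.card ≤ (t - 1) * (X.card + Y.card) := hmain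
    _ = (t - 1) * ((G.neighborSet u).ncard + (G.neighborSet v).ncard) := by
        rw [hXcard, hYcard]; ring
end
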